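/- arXiv:1803.00979 — 3 statements merged into one kernel-verified Lean document; each statement's English description precedes it below -/
import Mathlib

section
/- There exists an elastic collision system of 3 unit discs in ℝ² on the time interval ℝ which undergoes exactly 4 collisions, no two of them simultaneous, and there exists a time after all four collisions at which the three disc centers are collinear; in particular K(3,2) ≥ 4. -/
open scoped RealInnerProductSpace

noncomputable section

/-- An elastic collision system of unit balls in `ℝ^d`, indexed by `ι`, on the time
interval `I ⊆ ℝ`.  `x i` is the trajectory of the center of ball `i`, `vr i t` its right
derivative (velocity) at time `t` and `vl i t` its left derivative (which, for a
continuous piecewise linear trajectory, is the left limit of the right derivative).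
Fields `right_lin` and `left_lin` say that each trajectory is (locally) linear to the
right and to the left of every time, with the indicated one-sided derivatives; this
encodes continuity and piecewise linearity with locally finitely many breakpoints.
`dist_ge` says the closed unit balls have disjoint interiors, and `collision_rule` is
the elastic collision rule: whenever the right derivative of `x i` changes at a time `t`
(having a left limit in `I`), there is exactly one `j ≠ i` with `‖x i t - x j t‖ = 2`,
the velocity of `x j` also changes at `t`, no other velocity changes at `t`, and with
`u = (x i t - x j t)/2` the usual exchange of normal velocity components holds. -/
structure BallSystem (ι : Type) (d : ℕ) (I : Set ℝ) where
  x : ι → ℝ → EuclideanSpace ℝ (Fin d)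
  vr : ι → ℝ → EuclideanSpace ℝ (Fin d)
  vl : ι → ℝ → EuclideanSpace ℝ (Fin d)
  right_lin : ∀ i, ∀ t ∈ I, ∃ ε > 0, ∀ s ∈ Set.Icc t (t + ε) ∩ I,
    x i s = x i t + (s - t) • vr i t
  left_lin : ∀ i, ∀ t ∈ I, ∃ ε > 0, ∀ s ∈ Set.Icc (t - ε) t ∩ I,
    x i s = x i t + (s - t) • vl i t
  dist_ge : ∀ i j, i ≠ j → ∀ t ∈ I, 2 ≤ ‖x i t - x j t‖
  collision_rule : ∀ i, ∀ t ∈ I, (∃ s ∈ I, s < t) → vr i t ≠ vl i t →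
    ∃ j, j ≠ i ∧ ‖x i t - x j t‖ = 2 ∧ vr j t ≠ vl j t ∧
      (∀ k, k ≠ i → ‖x i t - x k t‖ = 2 → k = j) ∧
      (∀ k, k ≠ i → k ≠ j → vr k t = vl k t) ∧
      vr i t = vl i t -
        ⟪vl i t - vl j t, (2⁻¹ : ℝ) • (x i t - x j t)⟫ • ((2⁻¹ : ℝ) • (x i t - x j t)) ∧
      vr j t = vl j t +
        ⟪vl i t - vl j t, (2⁻¹ : ℝ) • (x i t - x j t)⟫ • ((2⁻¹ : ℝ) • (x i t - x j t))

/-- The set of collisions of the system: pairs `(t, {i,j})` such that at time `t` the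
balls `i` and `j` are tangent and both of their velocities change at `t`. -/
def BallSystem.collisions {ι : Type} [DecidableEq ι] {d : ℕ} {I : Set ℝ}
    (S : BallSystem ι d I) : Set (ℝ × Finset ι) :=
  {p | p.1 ∈ I ∧ (∃ s ∈ I, s < p.1) ∧ ∃ i j : ι, i ≠ j ∧ p.2 = {i, j} ∧
    ‖S.x i p.1 - S.x j p.1‖ = 2 ∧ S.vr i p.1 ≠ S.vl i p.1 ∧ S.vr j p.1 ≠ S.vl j p.1}

/-- `n1 = ⌊n/3⌋`. -/
def nOne (n : ℕ) : ℕ := n / 3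

/-- `n2 = n - 2 n1`. -/
def nTwo (n : ℕ) : ℕ := n - 2 * (n / 3)

/-- `f(n) = n1 (n1+1) n2 + n2 (n2-1)/2 + n1 (n1-1)`. -/
def f (n : ℕ) : ℕ :=
  nOne n * (nOne n + 1) * nTwo n + nTwo n * (nTwo n - 1) / 2 + nOne n * (nOne n - 1)

end

/-!
Each disc moves along a piecewise linear path whose velocity jumps only at its collisions, the
two discs of a collision receiving opposite impulses. Prescribing such a schedule of four
collisions with explicit rational data, every axiom of an elastic collision system reduces to
finitely many rational identities at the collision times, together with the fact that each
squared distance between centres, a quadratic polynomial in `t` between consecutive collisions,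
never drops below `4`. After the last collision the signed area of the triangle of centres is a
quadratic in `t` that changes sign between `t = 50` and `t = 51`, so the centres are collinear at
some intermediate time.
-/

open Set Filter Topology

noncomputable section

section KinkVelocity

variable {E κ : Type*} [AddCommGroup E] [Fintype κ]

def kinkVelRight (v : E) (τ : κ → ℝ) (w : κ → E) (t : ℝ) : E :=
  v + ∑ e, if τ e ≤ t then w e else 0

def kinkVelLeft (v : E) (τ : κ → ℝ) (w : κ → E) (t : ℝ) : E :=
  v + ∑ e, if τ e < t then w e else 0

lemma kinkVelRight_sub_kinkVelLeft (v : E) (τ : κ → ℝ) (w : κ → E) (t : ℝ) :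
    kinkVelRight v τ w t - kinkVelLeft v τ w t = ∑ e, if τ e = t then w e else 0 := by
  simp only [kinkVelRight, kinkVelLeft, add_sub_add_left_eq_sub, ← Finset.sum_sub_distrib]
  congr! 1 with e
  rcases lt_trichotomy (τ e) t with h | h | h
  · simp [h, h.le, h.ne]
  · simp [h]
  · simp [not_le.2 h, not_lt.2 h.le, h.ne']

lemma kinkVelRight_sub_kinkVelLeft_of_injective [DecidableEq κ] {τ : κ → ℝ}
    (hτ : Function.Injective τ) (v : E) (w : κ → E) (e : κ) :
    kinkVelRight v τ w (τ e) - kinkVelLeft v τ w (τ e) = w e := by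
  simp [kinkVelRight_sub_kinkVelLeft, hτ.eq_iff]

lemma kinkVelRight_eq_kinkVelLeft {τ : κ → ℝ} {t : ℝ} (ht : t ∉ range τ) (v : E)
    (w : κ → E) :
    kinkVelRight v τ w t = kinkVelLeft v τ w t := by
  rw [← sub_eq_zero, kinkVelRight_sub_kinkVelLeft]
  exact Finset.sum_eq_zero fun e _ => if_neg fun h => ht ⟨e, h⟩

end KinkVelocity

section KinkPath

variable {E κ : Type*} [AddCommGroup E] [Module ℝ E] [Fintype κ]

/-- The path starting as `p + t • v` whose velocity jumps by `w e` at time `τ e`. -/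
def kinkPath (p v : E) (τ : κ → ℝ) (w : κ → E) (t : ℝ) : E :=
  p + t • v + ∑ e, (t - τ e)⁺ • w e

lemma eventually_posPart_sub_nhdsGE (τ t : ℝ) :
    ∀ᶠ s in 𝓝[≥] t, (s - τ)⁺ = (t - τ)⁺ + (s - t) * if τ ≤ t then 1 else 0 := by
  by_cases h : τ ≤ t
  · filter_upwards [self_mem_nhdsWithin] with s (hs : t ≤ s)
    simp [h, sub_nonneg.2 (h.trans hs), sub_nonneg.2 h]
  · filter_upwards [nhdsWithin_le_nhds (Iio_mem_nhds (not_le.1 h))] with s (hs : s < τ)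
    simp [h, (sub_neg.2 hs).le, (sub_neg.2 (not_le.1 h)).le]

lemma eventually_posPart_sub_nhdsLE (τ t : ℝ) :
    ∀ᶠ s in 𝓝[≤] t, (s - τ)⁺ = (t - τ)⁺ + (s - t) * if τ < t then 1 else 0 := by
  by_cases h : τ < t
  · filter_upwards [nhdsWithin_le_nhds (Ioi_mem_nhds h)] with s (hs : τ < s)
    simp [h, (sub_pos.2 hs).le, (sub_pos.2 h).le]
  · filter_upwards [self_mem_nhdsWithin] with s (hs : s ≤ t)
    simp [h, sub_nonpos.2 (hs.trans (not_lt.1 h)), sub_nonpos.2 (not_lt.1 h)]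

lemma eventually_kinkPath_nhdsGE (p v : E) (τ : κ → ℝ) (w : κ → E) (t : ℝ) :
    ∀ᶠ s in 𝓝[≥] t,
      kinkPath p v τ w s = kinkPath p v τ w t + (s - t) • kinkVelRight v τ w t := by
  filter_upwards [eventually_all.2 fun e => eventually_posPart_sub_nhdsGE (τ e) t] with s hs
  have hw : ∑ e, ((s - t) * if τ e ≤ t then 1 else 0) • w e =
      (s - t) • ∑ e, if τ e ≤ t then w e else 0 := by
    rw [Finset.smul_sum]; congr! 1 with e; split_ifs <;> simp
  simp only [kinkPath, kinkVelRight, hs, add_smul, Finset.sum_add_distrib, hw]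
  module

lemma eventually_kinkPath_nhdsLE (p v : E) (τ : κ → ℝ) (w : κ → E) (t : ℝ) :
    ∀ᶠ s in 𝓝[≤] t,
      kinkPath p v τ w s = kinkPath p v τ w t + (s - t) • kinkVelLeft v τ w t := by
  filter_upwards [eventually_all.2 fun e => eventually_posPart_sub_nhdsLE (τ e) t] with s hs
  have hw : ∑ e, ((s - t) * if τ e < t then 1 else 0) • w e =
      (s - t) • ∑ e, if τ e < t then w e else 0 := by
    rw [Finset.smul_sum]; congr! 1 with e; split_ifs <;> simp
  simp only [kinkPath, kinkVelLeft, hs, add_smul, Finset.sum_add_distrib, hw]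
  module

lemma continuous_kinkPath [TopologicalSpace E] [IsTopologicalAddGroup E] [ContinuousSMul ℝ E]
    (p v : E) (τ : κ → ℝ) (w : κ → E) : Continuous (kinkPath p v τ w) := by
  unfold kinkPath
  have := continuous_posPart (α := ℝ)
  fun_prop

end KinkPath

lemma exists_Icc_of_eventually_nhdsGE {P : ℝ → Prop} {t : ℝ}
    (h : ∀ᶠ s in 𝓝[≥] t, P s) :
    ∃ ε > 0, ∀ s ∈ Icc t (t + ε), P s := by
  obtain ⟨u, htu, hu⟩ := mem_nhdsGE_iff_exists_Icc_subset.1 h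
  exact ⟨u - t, sub_pos.2 htu, fun s hs => hu (by simpa using hs)⟩

lemma exists_Icc_of_eventually_nhdsLE {P : ℝ → Prop} {t : ℝ}
    (h : ∀ᶠ s in 𝓝[≤] t, P s) :
    ∃ ε > 0, ∀ s ∈ Icc (t - ε) t, P s := by
  obtain ⟨l, hlt, hl⟩ := mem_nhdsLE_iff_exists_Icc_subset.1 h
  exact ⟨t - l, sub_pos.2 hlt, fun s hs => hl (by simpa using hs)⟩

section Coordinates

lemma kinkVelLeft_apply {n κ : Type*} [Fintype κ] (v : EuclideanSpace ℝ n) (τ : κ → ℝ)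
    (w : κ → EuclideanSpace ℝ n) (t : ℝ) (k : n) :
    kinkVelLeft v τ w t k = v k + ∑ e, if τ e < t then w e k else 0 := by
  simp only [kinkVelLeft, PiLp.add_apply, WithLp.ofLp_sum, Finset.sum_apply]
  exact congrArg _ (Finset.sum_congr rfl fun e _ => by split_ifs <;> rfl)

lemma kinkPath_apply {n κ : Type*} [Fintype κ] (p v : EuclideanSpace ℝ n) (τ : κ → ℝ)
    (w : κ → EuclideanSpace ℝ n) (t : ℝ) (k : n) :
    kinkPath p v τ w t k = p k + t * v k + ∑ e, (t - τ e)⁺ * w e k := by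
  simp [kinkPath]

variable (x : EuclideanSpace ℝ (Fin 2))

lemma EuclideanSpace.norm_sq_fin_two : ‖x‖ ^ 2 = x 0 ^ 2 + x 1 ^ 2 := by
  simp [EuclideanSpace.real_norm_sq_eq, Fin.sum_univ_two]

lemma EuclideanSpace.norm_eq_two_iff_fin_two : ‖x‖ = 2 ↔ x 0 ^ 2 + x 1 ^ 2 = 4 := by
  rw [← EuclideanSpace.norm_sq_fin_two, show (4 : ℝ) = 2 ^ 2 by norm_num,
    sq_eq_sq₀ (norm_nonneg x) zero_le_two]

lemma EuclideanSpace.two_le_norm_iff_fin_two : 2 ≤ ‖x‖ ↔ 4 ≤ x 0 ^ 2 + x 1 ^ 2 := by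
  rw [← EuclideanSpace.norm_sq_fin_two, show (4 : ℝ) = 2 ^ 2 by norm_num,
    sq_le_sq₀ zero_le_two (norm_nonneg x)]

lemma EuclideanSpace.collinear_of_cross_eq_zero {a b c : EuclideanSpace ℝ (Fin 2)}
    (h : (b 0 - a 0) * (c 1 - a 1) = (b 1 - a 1) * (c 0 - a 0)) : Collinear ℝ {a, b, c} := by
  by_cases hab : b = a
  · rw [hab, Set.insert_eq_of_mem (Set.mem_insert a _)]
    exact collinear_pair ℝ a c
  have hne : (b 0 - a 0) ^ 2 + (b 1 - a 1) ^ 2 ≠ 0 := by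
    have hnorm := EuclideanSpace.norm_sq_fin_two (b - a)
    simp only [PiLp.sub_apply] at hnorm
    rw [← hnorm]
    exact pow_ne_zero 2 (norm_ne_zero_iff.2 (sub_ne_zero.2 hab))
  set r := ((b 0 - a 0) * (c 0 - a 0) + (b 1 - a 1) * (c 1 - a 1)) /
    ((b 0 - a 0) ^ 2 + (b 1 - a 1) ^ 2)
  have hc : c = AffineMap.lineMap a b r := by
    ext k
    fin_cases k <;> simp [AffineMap.lineMap_apply_module, r] <;> field_simp
    · linear_combination -(b 1 - a 1) * h
    · linear_combination (b 0 - a 0) * h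
  rw [Set.pair_comm b c, Set.insert_comm a c]
  exact collinear_insert_of_mem_affineSpan_pair (hc ▸ AffineMap.lineMap_mem_affineSpan_pair r a b)

end Coordinates

/-- Ball `i` moves along `pos i + t • vel i` until its first collision; at the collision `e` the
balls `fst e` and `snd e` receive the velocity changes `-impulse e` and `impulse e`. -/
structure CollisionSchedule (ι κ : Type) (d : ℕ) where
  pos : ι → EuclideanSpace ℝ (Fin d)
  vel : ι → EuclideanSpace ℝ (Fin d)
  time : κ → ℝ
  fst : κ → ι
  snd : κ → ι
  impulse : κ → EuclideanSpace ℝ (Fin d)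

namespace CollisionSchedule

variable {ι κ : Type} [DecidableEq ι] [Fintype κ] {d : ℕ} (S : CollisionSchedule ι κ d)

def kick (e : κ) (i : ι) : EuclideanSpace ℝ (Fin d) :=
  if i = S.fst e then -S.impulse e else if i = S.snd e then S.impulse e else 0

def path (i : ι) : ℝ → EuclideanSpace ℝ (Fin d) :=
  kinkPath (S.pos i) (S.vel i) S.time (S.kick · i)

def velRight (i : ι) : ℝ → EuclideanSpace ℝ (Fin d) :=
  kinkVelRight (S.vel i) S.time (S.kick · i)

def velLeft (i : ι) : ℝ → EuclideanSpace ℝ (Fin d) :=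
  kinkVelLeft (S.vel i) S.time (S.kick · i)

def normal (e : κ) : EuclideanSpace ℝ (Fin d) :=
  (2⁻¹ : ℝ) • (S.path (S.fst e) (S.time e) - S.path (S.snd e) (S.time e))

lemma continuous_path (i : ι) : Continuous (S.path i) := continuous_kinkPath _ _ _ _

structure IsElastic : Prop where
  time_injective : Function.Injective S.time
  fst_ne_snd : ∀ e, S.fst e ≠ S.snd e
  impulse_ne_zero : ∀ e, S.impulse e ≠ 0
  two_le_dist : ∀ i j, i ≠ j → ∀ t, 2 ≤ ‖S.path i t - S.path j t‖
  dist_eq_two : ∀ e, ‖S.path (S.fst e) (S.time e) - S.path (S.snd e) (S.time e)‖ = 2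
  dist_ne_two : ∀ e k, k ≠ S.fst e → k ≠ S.snd e →
    ‖S.path (S.fst e) (S.time e) - S.path k (S.time e)‖ ≠ 2 ∧
      ‖S.path (S.snd e) (S.time e) - S.path k (S.time e)‖ ≠ 2
  impulse_eq : ∀ e, S.impulse e =
    ⟪S.velLeft (S.fst e) (S.time e) - S.velLeft (S.snd e) (S.time e), S.normal e⟫ • S.normal e

variable {S}

namespace IsElastic

lemma velRight_time (h : S.IsElastic) (e : κ) (i : ι) :
    S.velRight i (S.time e) = S.velLeft i (S.time e) + S.kick e i := by
  classical
  rw [← sub_eq_iff_eq_add', velRight, velLeft,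
    kinkVelRight_sub_kinkVelLeft_of_injective h.time_injective]

lemma velRight_ne_velLeft_time_iff (h : S.IsElastic) (e : κ) (i : ι) :
    S.velRight i (S.time e) ≠ S.velLeft i (S.time e) ↔ i = S.fst e ∨ i = S.snd e := by
  rw [h.velRight_time, Ne, add_eq_left, kick]
  split_ifs with h1 h2 <;> simp [*, h.impulse_ne_zero]

lemma exists_time_eq_of_velRight_ne_velLeft (h : S.IsElastic) {i : ι} {t : ℝ}
    (hne : S.velRight i t ≠ S.velLeft i t) :
    ∃ e, S.time e = t ∧ (i = S.fst e ∨ i = S.snd e) := by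
  by_cases ht : t ∈ Set.range S.time
  · obtain ⟨e, rfl⟩ := ht
    exact ⟨e, rfl, (h.velRight_ne_velLeft_time_iff e i).1 hne⟩
  · exact absurd (kinkVelRight_eq_kinkVelLeft ht _ _) hne

lemma collision_rule (h : S.IsElastic) (i : ι) (t : ℝ) (hne : S.velRight i t ≠ S.velLeft i t) :
    ∃ j, j ≠ i ∧ ‖S.path i t - S.path j t‖ = 2 ∧ S.velRight j t ≠ S.velLeft j t ∧
      (∀ k, k ≠ i → ‖S.path i t - S.path k t‖ = 2 → k = j) ∧
      (∀ k, k ≠ i → k ≠ j → S.velRight k t = S.velLeft k t) ∧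
      S.velRight i t = S.velLeft i t -
        ⟪S.velLeft i t - S.velLeft j t, (2⁻¹ : ℝ) • (S.path i t - S.path j t)⟫ •
          ((2⁻¹ : ℝ) • (S.path i t - S.path j t)) ∧
      S.velRight j t = S.velLeft j t +
        ⟪S.velLeft i t - S.velLeft j t, (2⁻¹ : ℝ) • (S.path i t - S.path j t)⟫ •
          ((2⁻¹ : ℝ) • (S.path i t - S.path j t)) := by
  obtain ⟨e, rfl, rfl | rfl⟩ := h.exists_time_eq_of_velRight_ne_velLeft hne
  · have hfs := h.fst_ne_snd e
    refine ⟨S.snd e, hfs.symm, h.dist_eq_two e, (h.velRight_ne_velLeft_time_iff e _).2 (.inr rfl),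
      fun k hk hk2 => by_contra fun hks => (h.dist_ne_two e k hk hks).1 hk2,
      fun k hk hks => not_not.1 fun hv => ?_, ?_, ?_⟩
    · rcases (h.velRight_ne_velLeft_time_iff e k).1 hv with rfl | rfl <;> contradiction
    · rw [h.velRight_time, kick, if_pos rfl, ← normal, ← h.impulse_eq, sub_eq_add_neg]
    · rw [h.velRight_time, kick, if_neg hfs.symm, if_pos rfl, ← normal, ← h.impulse_eq]
  · have hfs := h.fst_ne_snd e
    have hswap : ⟪S.velLeft (S.snd e) (S.time e) - S.velLeft (S.fst e) (S.time e),
        (2⁻¹ : ℝ) • (S.path (S.snd e) (S.time e) - S.path (S.fst e) (S.time e))⟫ •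
          ((2⁻¹ : ℝ) • (S.path (S.snd e) (S.time e) - S.path (S.fst e) (S.time e))) =
        -S.impulse e := by
      rw [h.impulse_eq, normal, ← neg_sub (S.velLeft (S.fst e) _),
        ← neg_sub (S.path (S.fst e) _), smul_neg, inner_neg_neg, smul_neg]
    refine ⟨S.fst e, hfs, by rw [norm_sub_rev]; exact h.dist_eq_two e,
      (h.velRight_ne_velLeft_time_iff e _).2 (.inl rfl),
      fun k hk hk2 => by_contra fun hkf => (h.dist_ne_two e k hkf hk).2 hk2,
      fun k hk hkf => not_not.1 fun hv => ?_, ?_, ?_⟩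
    · rcases (h.velRight_ne_velLeft_time_iff e k).1 hv with rfl | rfl <;> contradiction
    · rw [h.velRight_time, kick, if_neg hfs.symm, if_pos rfl, hswap, sub_neg_eq_add]
    · rw [h.velRight_time, kick, if_pos rfl, hswap]

end IsElastic

def toBallSystem (h : S.IsElastic) : BallSystem ι d Set.univ where
  x := S.path
  vr := S.velRight
  vl := S.velLeft
  right_lin _ t _ := (exists_Icc_of_eventually_nhdsGE (eventually_kinkPath_nhdsGE _ _ _ _ t)).imp
    fun _ ⟨hε, hlin⟩ => ⟨hε, fun s hs => hlin s hs.1⟩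
  left_lin _ t _ := (exists_Icc_of_eventually_nhdsLE (eventually_kinkPath_nhdsLE _ _ _ _ t)).imp
    fun _ ⟨hε, hlin⟩ => ⟨hε, fun s hs => hlin s hs.1⟩
  dist_ge i j hij t _ := h.two_le_dist i j hij t
  collision_rule i t _ _ hne := h.collision_rule i t hne

lemma IsElastic.collisions_toBallSystem (h : S.IsElastic) :
    (S.toBallSystem h).collisions = Set.range fun e => (S.time e, {S.fst e, S.snd e}) := by
  ext ⟨t, P⟩
  constructor
  · rintro ⟨-, -, i, j, hij, rfl, -, hi, hj⟩
    obtain ⟨e, rfl, hie⟩ := h.exists_time_eq_of_velRight_ne_velLeft hi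
    have hje := (h.velRight_ne_velLeft_time_iff e j).1 hj
    refine ⟨e, ?_⟩
    rcases hie with rfl | rfl <;> rcases hje with rfl | rfl
    · exact absurd rfl hij
    · rfl
    · simp [Finset.pair_comm]
    · exact absurd rfl hij
  · rintro ⟨e, he⟩
    cases he
    exact ⟨Set.mem_univ _, ⟨S.time e - 1, Set.mem_univ _, by linarith⟩, S.fst e, S.snd e,
      h.fst_ne_snd e, rfl, h.dist_eq_two e, (h.velRight_ne_velLeft_time_iff e _).2 (.inl rfl),
      (h.velRight_ne_velLeft_time_iff e _).2 (.inr rfl)⟩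

lemma IsElastic.collisions_finite [Finite κ] (h : S.IsElastic) :
    (S.toBallSystem h).collisions.Finite := by
  rw [h.collisions_toBallSystem]
  exact Set.finite_range _

lemma IsElastic.ncard_collisions (h : S.IsElastic) :
    (S.toBallSystem h).collisions.ncard = Fintype.card κ := by
  rw [h.collisions_toBallSystem, Set.ncard_range_of_injective, Nat.card_eq_fintype_card]
  exact fun e e' he => h.time_injective (congrArg Prod.fst he)

lemma IsElastic.eq_of_mem_collisions (h : S.IsElastic) {p q : ℝ × Finset ι}
    (hp : p ∈ (S.toBallSystem h).collisions) (hq : q ∈ (S.toBallSystem h).collisions)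
    (hpq : p.1 = q.1) : p = q := by
  rw [h.collisions_toBallSystem] at hp hq
  obtain ⟨e, rfl⟩ := hp
  obtain ⟨e', rfl⟩ := hq
  rw [h.time_injective hpq]

end CollisionSchedule

def threeDiscs : CollisionSchedule (Fin 3) (Fin 4) 2 where
  pos := ![!₂[-16/15, 17/25], !₂[8/15, -13/25], !₂[133485899/54968368, 1353055919/5496836800]]
  vel := ![!₂[15559729/5762300, 4937383/2881150], !₂[-9833463/5762300, 251348/288115],
    !₂[-9353378851/1030656900, -222754699/687104600]]
  time := ![0, 1/200, 1/40, 2]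
  fst := ![0, 1, 0, 0]
  snd := ![1, 2, 1, 2]
  impulse := ![!₂[3481174/1440575, -5221761/2881150], !₂[32265/3974, 53775/15896],
    !₂[6573/57623, -6260/57623], !₂[45838836/355822025, -61118448/355822025]]

attribute [local simp] CollisionSchedule.path CollisionSchedule.velLeft CollisionSchedule.normal
  CollisionSchedule.kick kinkPath_apply kinkVelLeft_apply Fin.sum_univ_four Fin.sum_univ_two
  PiLp.inner_apply threeDiscs

lemma threeDiscs_two_le_dist (i j : Fin 3) (hij : i ≠ j) (t : ℝ) :
    2 ≤ ‖threeDiscs.path i t - threeDiscs.path j t‖ := by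
  wlog hlt : i < j generalizing i j
  · rw [norm_sub_rev]; exact this j i hij.symm (lt_of_le_of_ne (not_lt.1 hlt) hij.symm)
  rw [EuclideanSpace.two_le_norm_iff_fin_two]
  -- each branch of `split_ifs` is an interval between collision times, on which the squared
  -- distance is a quadratic in `t`, monotone there
  fin_cases i <;> fin_cases j <;> simp at hlt <;> simp [posPart_def, max_def] <;>
    split_ifs <;> nlinarith

lemma threeDiscs_time_injective : Function.Injective threeDiscs.time := by
  refine StrictMono.injective (Fin.strictMono_iff_lt_succ.2 fun e => ?_)
  fin_cases e <;> simp <;> norm_num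

lemma threeDiscs_impulse_ne_zero (e : Fin 4) : threeDiscs.impulse e ≠ 0 := by
  intro h
  have := congrArg (· 0) h
  fin_cases e <;> simp at this

lemma threeDiscs_dist_eq_two (e : Fin 4) :
    ‖threeDiscs.path (threeDiscs.fst e) (threeDiscs.time e) -
      threeDiscs.path (threeDiscs.snd e) (threeDiscs.time e)‖ = 2 := by
  rw [EuclideanSpace.norm_eq_two_iff_fin_two]
  fin_cases e <;> simp <;> norm_num

lemma threeDiscs_dist_ne_two (e : Fin 4) (k : Fin 3) (hk1 : k ≠ threeDiscs.fst e)
    (hk2 : k ≠ threeDiscs.snd e) :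
    ‖threeDiscs.path (threeDiscs.fst e) (threeDiscs.time e) -
        threeDiscs.path k (threeDiscs.time e)‖ ≠ 2 ∧
      ‖threeDiscs.path (threeDiscs.snd e) (threeDiscs.time e) -
        threeDiscs.path k (threeDiscs.time e)‖ ≠ 2 := by
  simp only [Ne, EuclideanSpace.norm_eq_two_iff_fin_two]
  fin_cases e <;> fin_cases k <;> simp at hk1 hk2 ⊢ <;> norm_num

lemma threeDiscs_impulse_eq (e : Fin 4) : threeDiscs.impulse e =
    ⟪threeDiscs.velLeft (threeDiscs.fst e) (threeDiscs.time e) -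
      threeDiscs.velLeft (threeDiscs.snd e) (threeDiscs.time e), threeDiscs.normal e⟫ •
      threeDiscs.normal e := by
  ext k
  fin_cases e <;> fin_cases k <;> simp <;> norm_num

lemma threeDiscs_exists_collinear : ∃ t, (∀ e, threeDiscs.time e < t) ∧
    Collinear ℝ {threeDiscs.path 0 t, threeDiscs.path 1 t, threeDiscs.path 2 t} := by
  let x := threeDiscs.path
  let cross (t : ℝ) : ℝ :=
    (x 1 t 0 - x 0 t 0) * (x 2 t 1 - x 0 t 1) - (x 1 t 1 - x 0 t 1) * (x 2 t 0 - x 0 t 0)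
  have hpath (i : Fin 3) (k : Fin 2) : Continuous fun t => x i t k :=
    (PiLp.continuous_apply 2 _ k).comp (threeDiscs.continuous_path i)
  have hcross : Continuous cross :=
    ((hpath 1 0).sub (hpath 0 0)).mul ((hpath 2 1).sub (hpath 0 1)) |>.sub
      (((hpath 1 1).sub (hpath 0 1)).mul ((hpath 2 0).sub (hpath 0 0)))
  have h50 : 0 ≤ cross 50 := by simp [cross, x]; norm_num
  have h51 : cross 51 ≤ 0 := by simp [cross, x]; norm_num
  obtain ⟨t, ht, hzero⟩ := intermediate_value_Icc' (by norm_num : (50 : ℝ) ≤ 51)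
    hcross.continuousOn ⟨h51, h50⟩
  refine ⟨t, fun e => ?_, EuclideanSpace.collinear_of_cross_eq_zero (sub_eq_zero.1 hzero)⟩
  fin_cases e <;> simp <;> linarith [ht.1]

lemma threeDiscs_isElastic : threeDiscs.IsElastic where
  time_injective := threeDiscs_time_injective
  fst_ne_snd := by decide
  impulse_ne_zero := threeDiscs_impulse_ne_zero
  two_le_dist := threeDiscs_two_le_dist
  dist_eq_two := threeDiscs_dist_eq_two
  dist_ne_two := threeDiscs_dist_ne_two
  impulse_eq := threeDiscs_impulse_eq

end

/-- There is an elastic collision system of `3` unit discs in `ℝ²`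
on the time interval `ℝ` with exactly `4` collisions, no two of them simultaneous,
and a time after all four collisions at which the three centers are collinear. -/
theorem three_discs_four_collisions :
    ∃ S : BallSystem (Fin 3) 2 Set.univ,
      S.collisions.Finite ∧ S.collisions.ncard = 4 ∧
      (∀ p ∈ S.collisions, ∀ q ∈ S.collisions, p.1 = q.1 → p = q) ∧
      ∃ t : ℝ, (∀ p ∈ S.collisions, p.1 < t) ∧
        Collinear ℝ ({S.x 0 t, S.x 1 t, S.x 2 t} : Set (EuclideanSpace ℝ (Fin 2))) := by
  have h := threeDiscs_isElastic
  obtain ⟨t, ht, hcol⟩ := threeDiscs_exists_collinear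
  refine ⟨threeDiscs.toBallSystem h, h.collisions_finite, h.ncard_collisions,
    fun p hp q hq => h.eq_of_mem_collisions hp hq, t, ?_, hcol⟩
  rw [h.collisions_toBallSystem]
  rintro _ ⟨e, rfl⟩
  exact ht e
end

section
/- Let T > 0 and δ > 0, and let F_k, F, G_k, G be ℝ^m-valued right-continuous functions with left limits on [0, T+2δ]. Assume: F_k → F and G_k → G in the Skorohod sense in D[0,R] for every 0 < R < T; there is a sequence t_k → T such that (i) F and G are constant on [T−2δ, T) and constant on (T, T+2δ]; (ii) F_k and G_k are constant on [T−δ, t_k) and constant on (t_k, T+δ]; (iii) there is a sequence α_k → 0 with |F_k(t_k) − F(T)| ≤ |G_k(t_k−) − G(T−)| + |F_k(t_k−) − F(T−)| + α_k for every k. Then F_k → F in the Skorohod sense in D[0, T+δ]. -/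
open Filter

noncomputable section

/-- A time change of `[0,T]`: a strictly increasing continuous bijection of `[0,T]`
onto itself. -/
def IsTimeChange (T : ℝ) (l : ℝ → ℝ) : Prop :=
  StrictMonoOn l (Set.Icc 0 T) ∧ ContinuousOn l (Set.Icc 0 T) ∧
    l '' Set.Icc 0 T = Set.Icc 0 T

/-- `SkorohodTendsto T Fk F` says that `dist₀^T (Fk k, F) → 0` as `k → ∞`, where
`dist₀^T (f,g)` is the infimum of `ε > 0` such that some time change `λ` of `[0,T]`
satisfies `‖λ‖_T ≤ ε` (with `‖λ‖_T = sup_{0 ≤ s < t ≤ T} |log((λ t - λ s)/(t - s))|`)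
and `sup_{0 ≤ t ≤ T} |f t - g (λ t)| ≤ ε`. -/
def SkorohodTendsto {m : ℕ} (T : ℝ) (Fk : ℕ → ℝ → EuclideanSpace ℝ (Fin m))
    (F : ℝ → EuclideanSpace ℝ (Fin m)) : Prop :=
  ∀ ε > (0 : ℝ), ∃ K : ℕ, ∀ k ≥ K, ∃ l : ℝ → ℝ, IsTimeChange T l ∧
    (∀ s t : ℝ, 0 ≤ s → s < t → t ≤ T → |Real.log ((l t - l s) / (t - s))| ≤ ε) ∧
    ∀ t ∈ Set.Icc (0 : ℝ) T, ‖Fk k t - F (l t)‖ ≤ ε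

/-- `F` is right-continuous with left limits on `[0,T']`. -/
def RCLLOn {m : ℕ} (F : ℝ → EuclideanSpace ℝ (Fin m)) (T' : ℝ) : Prop :=
  (∀ t ∈ Set.Ico (0 : ℝ) T', ContinuousWithinAt F (Set.Ici t) t) ∧
  (∀ t ∈ Set.Ioc (0 : ℝ) T', ∃ L, Tendsto F (nhdsWithin t (Set.Iio t)) (nhds L))

end

/-!
Pick `R ∈ [T - δ, T)`, so that `F`, `G` are constant on `[R, T)` and `F_k`, `G_k` on `[R, t_k)`,
and a time change `λ_k` of `[0, R]` witnessing `F_k ≈ F` there. Extend `λ_k` affinely, sending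
`[R, t_k]` onto `[R, T]` and `[t_k, T + δ]` onto `[T, T + δ]`; both slopes tend to `1` since
`t_k → T`. Before `t_k` the error is the error at `R`; from `t_k` on, by right continuity, it is
`|F_k(t_k) - F(T)|`, which (iii) bounds by the errors of `G_k` and `F_k` at `R` plus `α_k`.
-/

open Set Function

/-- The increment form of `‖l‖ ≤ ε` on `[a, b]`; unlike the logarithmic form it can be glued
across adjacent intervals. -/
def SlopeBoundedOn (l : ℝ → ℝ) (a b ε : ℝ) : Prop :=
  ∀ ⦃s t : ℝ⦄, a ≤ s → s ≤ t → t ≤ b →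
    Real.exp (-ε) * (t - s) ≤ l t - l s ∧ l t - l s ≤ Real.exp ε * (t - s)

namespace SlopeBoundedOn

variable {l l' : ℝ → ℝ} {a b c ε : ℝ}

theorem congr (h : SlopeBoundedOn l a b ε) (hl : EqOn l l' (Icc a b)) :
    SlopeBoundedOn l' a b ε := by
  intro s t hs hst ht
  rw [← hl ⟨hs.trans hst, ht⟩, ← hl ⟨hs, hst.trans ht⟩]
  exact h hs hst ht

theorem union (h₁ : SlopeBoundedOn l a b ε) (h₂ : SlopeBoundedOn l b c ε) :
    SlopeBoundedOn l a c ε := by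
  intro s t hs hst ht
  rcases le_or_gt t b with htb | hbt
  · exact h₁ hs hst htb
  rcases le_or_gt b s with hbs | hsb
  · exact h₂ hbs hst ht
  obtain ⟨u₁, u₂⟩ := h₁ hs hsb.le le_rfl
  obtain ⟨v₁, v₂⟩ := h₂ le_rfl hbt.le ht
  constructor <;> nlinarith

theorem strictMonoOn (h : SlopeBoundedOn l a b ε) : StrictMonoOn l (Icc a b) := by
  intro s hs t ht hst
  have := (h hs.1 hst.le ht.2).1
  have := mul_pos (Real.exp_pos (-ε)) (sub_pos.2 hst)
  linarith

theorem continuousOn (h : SlopeBoundedOn l a b ε) : ContinuousOn l (Icc a b) := by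
  have hdist : ∀ s ∈ Icc a b, ∀ t ∈ Icc a b, s ≤ t →
      dist (l s) (l t) ≤ Real.exp ε * dist s t := by
    intro s hs t ht hst
    obtain ⟨h₁, h₂⟩ := h hs.1 hst ht.2
    have := mul_nonneg (Real.exp_pos (-ε)).le (sub_nonneg.2 hst)
    rw [dist_comm, Real.dist_eq, abs_of_nonneg (by linarith), dist_comm, Real.dist_eq,
      abs_of_nonneg (by linarith)]
    exact h₂
  have hlip : LipschitzOnWith (Real.exp ε).toNNReal l (Icc a b) := by
    refine LipschitzOnWith.of_dist_le_mul fun s hs t ht => ?_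
    rw [Real.coe_toNNReal _ (Real.exp_pos ε).le]
    rcases le_total s t with hst | hts
    · exact hdist s hs t ht hst
    · rw [dist_comm, dist_comm s]
      exact hdist t ht s hs hts
  exact hlip.continuousOn

theorem abs_log_le (h : SlopeBoundedOn l a b ε) :
    ∀ s t : ℝ, a ≤ s → s < t → t ≤ b → |Real.log ((l t - l s) / (t - s))| ≤ ε := by
  intro s t hs hst ht
  obtain ⟨h₁, h₂⟩ := h hs hst.le ht
  have hts : 0 < t - s := sub_pos.2 hst
  have hlo : Real.exp (-ε) ≤ (l t - l s) / (t - s) := (le_div_iff₀ hts).2 h₁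
  have hpos : 0 < (l t - l s) / (t - s) := (Real.exp_pos _).trans_le hlo
  have hlog_lo := (Real.le_log_iff_exp_le hpos).2 hlo
  exact abs_le.2 ⟨by linarith, (Real.log_le_iff_le_exp hpos).2 ((div_le_iff₀ hts).2 h₂)⟩

end SlopeBoundedOn

theorem slopeBoundedOn_of_abs_log_le {l : ℝ → ℝ} {a b ε : ℝ}
    (hl : StrictMonoOn l (Icc a b))
    (hlog : ∀ s t : ℝ, a ≤ s → s < t → t ≤ b →
      |Real.log ((l t - l s) / (t - s))| ≤ ε) :
    SlopeBoundedOn l a b ε := by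
  intro s t hs hst ht
  rcases hst.eq_or_lt with rfl | hst
  · simp
  have hts : 0 < t - s := sub_pos.2 hst
  have hpos : 0 < (l t - l s) / (t - s) :=
    div_pos (sub_pos.2 (hl ⟨hs, hst.le.trans ht⟩ ⟨hs.trans hst.le, ht⟩ hst)) hts
  obtain ⟨hlo, hhi⟩ := abs_le.1 (hlog s t hs hst ht)
  exact ⟨(le_div_iff₀ hts).1 ((Real.le_log_iff_exp_le hpos).1 (by linarith)),
    (div_le_iff₀ hts).1 ((Real.log_le_iff_le_exp hpos).1 hhi)⟩

namespace IsTimeChange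

variable {T : ℝ} {l : ℝ → ℝ}

theorem map_zero (h : IsTimeChange T l) (hT : 0 ≤ T) : l 0 = 0 := by
  obtain ⟨hmono, -, himage⟩ := h
  have h0 : (0 : ℝ) ∈ Icc 0 T := left_mem_Icc.2 hT
  obtain ⟨x, hx, hlx⟩ : (0 : ℝ) ∈ l '' Icc 0 T := by rwa [himage]
  have hl0 : l 0 ∈ Icc 0 T := himage ▸ mem_image_of_mem l h0
  exact le_antisymm (hlx ▸ hmono.monotoneOn h0 hx hx.1) hl0.1

theorem map_right (h : IsTimeChange T l) (hT : 0 ≤ T) : l T = T := by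
  obtain ⟨hmono, -, himage⟩ := h
  have hT' : T ∈ Icc 0 T := right_mem_Icc.2 hT
  obtain ⟨x, hx, hlx⟩ : T ∈ l '' Icc 0 T := by rwa [himage]
  have hlT : l T ∈ Icc 0 T := himage ▸ mem_image_of_mem l hT'
  have hlxT := hmono.monotoneOn hx hT' hx.2
  rw [hlx] at hlxT
  exact le_antisymm hlT.2 hlxT

theorem of_slopeBoundedOn {ε : ℝ} (h : SlopeBoundedOn l 0 T ε) (hT : 0 ≤ T) (h0 : l 0 = 0)
    (hlT : l T = T) : IsTimeChange T l := by
  refine ⟨h.strictMonoOn, h.continuousOn, ?_⟩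
  rw [h.continuousOn.image_Icc_of_monotoneOn hT h.strictMonoOn.monotoneOn, h0, hlT]

end IsTimeChange

noncomputable def lineThrough (x₀ y₀ x₁ y₁ t : ℝ) : ℝ :=
  y₀ + (y₁ - y₀) / (x₁ - x₀) * (t - x₀)

section lineThrough

variable {x₀ y₀ x₁ y₁ : ℝ}

theorem lineThrough_left : lineThrough x₀ y₀ x₁ y₁ x₀ = y₀ := by
  simp [lineThrough]

theorem lineThrough_right (h : x₀ ≠ x₁) : lineThrough x₀ y₀ x₁ y₁ x₁ = y₁ := by
  rw [lineThrough, div_mul_cancel₀ _ (sub_ne_zero.2 h.symm)]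
  ring

theorem slopeBoundedOn_lineThrough {a b ε : ℝ}
    (h : (y₁ - y₀) / (x₁ - x₀) ∈ Icc (Real.exp (-ε)) (Real.exp ε)) :
    SlopeBoundedOn (lineThrough x₀ y₀ x₁ y₁) a b ε := by
  intro s t _ hst _
  have hdiff : lineThrough x₀ y₀ x₁ y₁ t - lineThrough x₀ y₀ x₁ y₁ s =
      (y₁ - y₀) / (x₁ - x₀) * (t - s) := by
    unfold lineThrough
    ring
  rw [hdiff]
  exact ⟨mul_le_mul_of_nonneg_right h.1 (sub_nonneg.2 hst),
    mul_le_mul_of_nonneg_right h.2 (sub_nonneg.2 hst)⟩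

theorem eventually_lineThrough_slopes_mem {ι : Type*} {L : Filter ι} {u : ι → ℝ}
    {R T T' ε : ℝ} (hu : Tendsto u L (nhds T)) (hRT : R < T) (hTT' : T < T') (hε : 0 < ε) :
    ∀ᶠ k in L, R < u k ∧ u k < T' ∧
      (T - R) / (u k - R) ∈ Icc (Real.exp (-ε)) (Real.exp ε) ∧
      (T' - T) / (T' - u k) ∈ Icc (Real.exp (-ε)) (Real.exp ε) := by
  have hI : Icc (Real.exp (-ε)) (Real.exp ε) ∈ nhds (1 : ℝ) :=
    Icc_mem_nhds (Real.exp_lt_one_iff.2 (neg_neg_of_pos hε)) (Real.one_lt_exp_iff.2 hε)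
  have hR : T - R ≠ 0 := sub_ne_zero.2 hRT.ne'
  have hT' : T' - T ≠ 0 := sub_ne_zero.2 hTT'.ne'
  have h₁ : Tendsto (fun k => (T - R) / (u k - R)) L (nhds 1) := by
    have h := (tendsto_const_nhds (x := T - R)).div (hu.sub_const R) hR
    rwa [div_self hR] at h
  have h₂ : Tendsto (fun k => (T' - T) / (T' - u k)) L (nhds 1) := by
    have h := (tendsto_const_nhds (x := T' - T)).div (tendsto_const_nhds.sub hu) hT'
    rwa [div_self hT'] at h
  filter_upwards [hu (Ioo_mem_nhds hRT hTT'), h₁ hI, h₂ hI] with k hk h₁ h₂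
  exact ⟨hk.1, hk.2, h₁, h₂⟩

end lineThrough

noncomputable def extendTimeChange (lam : ℝ → ℝ) (R s T T' t : ℝ) : ℝ :=
  if t ≤ R then lam t else if t ≤ s then lineThrough R R s T t else lineThrough s T T' T' t

section extendTimeChange

variable {lam : ℝ → ℝ} {R s T T' : ℝ}

theorem extendTimeChange_eqOn_Iic : EqOn (extendTimeChange lam R s T T') lam (Iic R) :=
  fun _ ht => if_pos ht

theorem extendTimeChange_eqOn_Icc (hlam : lam R = R) :
    EqOn (extendTimeChange lam R s T T') (lineThrough R R s T) (Icc R s) := by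
  intro t ht
  rcases ht.1.eq_or_lt with rfl | hRt
  · rw [extendTimeChange_eqOn_Iic self_mem_Iic, hlam, lineThrough_left]
  · exact (if_neg hRt.not_ge).trans (if_pos ht.2)

theorem extendTimeChange_eqOn_Ici (hRs : R < s) (hlam : lam R = R) :
    EqOn (extendTimeChange lam R s T T') (lineThrough s T T' T') (Ici s) := by
  intro t ht
  rcases (mem_Ici.1 ht).eq_or_lt with rfl | hst
  · rw [extendTimeChange_eqOn_Icc hlam ⟨hRs.le, le_rfl⟩, lineThrough_right hRs.ne,
      lineThrough_left]
  · exact (if_neg (hRs.trans hst).not_ge).trans (if_neg hst.not_ge)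

theorem slopeBoundedOn_extendTimeChange {ε : ℝ} (hR : 0 < R) (hRs : R < s)
    (hlam : IsTimeChange R lam)
    (hlog : ∀ u v : ℝ, 0 ≤ u → u < v → v ≤ R →
      |Real.log ((lam v - lam u) / (v - u))| ≤ ε)
    (hc₁ : (T - R) / (s - R) ∈ Icc (Real.exp (-ε)) (Real.exp ε))
    (hc₂ : (T' - T) / (T' - s) ∈ Icc (Real.exp (-ε)) (Real.exp ε)) :
    SlopeBoundedOn (extendTimeChange lam R s T T') 0 T' ε := by
  have hlamR := hlam.map_right hR.le
  have h₁ : SlopeBoundedOn (extendTimeChange lam R s T T') 0 R ε :=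
    (slopeBoundedOn_of_abs_log_le hlam.1 hlog).congr
      fun t ht => (extendTimeChange_eqOn_Iic ht.2).symm
  have h₂ : SlopeBoundedOn (extendTimeChange lam R s T T') R s ε :=
    (slopeBoundedOn_lineThrough hc₁).congr (extendTimeChange_eqOn_Icc hlamR).symm
  have h₃ : SlopeBoundedOn (extendTimeChange lam R s T T') s T' ε :=
    (slopeBoundedOn_lineThrough hc₂).congr
      fun t ht => (extendTimeChange_eqOn_Ici hRs hlamR ht.1).symm
  exact (h₁.union h₂).union h₃

end extendTimeChange

section Constancy

variable {β : Type*} [TopologicalSpace β] [T2Space β] {f : ℝ → β} {a b : ℝ}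

theorem leftLim_eq_of_forall_Ico (hab : a < b) (h : ∀ t ∈ Ico a b, f t = f a) :
    leftLim f b = f a := by
  refine leftLim_eq_of_tendsto (tendsto_const_nhds.congr' ?_)
  filter_upwards [Ioo_mem_nhdsLT hab] with t ht using (h t ⟨ht.1.le, ht.2⟩).symm

theorem ContinuousWithinAt.eq_of_forall_Ioc (hf : ContinuousWithinAt f (Ici a) a) (hab : a < b)
    (h : ∀ s ∈ Ioc a b, ∀ t ∈ Ioc a b, f s = f t) : ∀ t ∈ Ioc a b, f t = f a := by
  intro t ht
  refine tendsto_nhds_unique (tendsto_const_nhds.congr' ?_) (hf.mono Ioi_subset_Ici_self)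
  filter_upwards [Ioc_mem_nhdsGT hab] with u hu using h t ht u hu

end Constancy

theorem exists_timeChange_norm_sub_le {E : Type*} [SeminormedAddCommGroup E] {f F : ℝ → E}
    {lam : ℝ → ℝ} {R s T T' ε : ℝ} (hR : 0 < R) (hRs : R < s) (hsT' : s < T')
    (hlam : IsTimeChange R lam)
    (hlog : ∀ u v : ℝ, 0 ≤ u → u < v → v ≤ R →
      |Real.log ((lam v - lam u) / (v - u))| ≤ ε)
    (hlamf : ∀ t ∈ Icc 0 R, ‖f t - F (lam t)‖ ≤ ε)
    (hc₁ : (T - R) / (s - R) ∈ Icc (Real.exp (-ε)) (Real.exp ε))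
    (hc₂ : (T' - T) / (T' - s) ∈ Icc (Real.exp (-ε)) (Real.exp ε))
    (hf₁ : ∀ t ∈ Ico R s, f t = f R) (hF₁ : ∀ t ∈ Ico R T, F t = F R)
    (hf₂ : ∀ t ∈ Ioc s T', f t = f s) (hF₂ : ∀ t ∈ Ioc T T', F t = F T)
    (hjump : ‖f s - F T‖ ≤ ε) :
    ∃ l : ℝ → ℝ, IsTimeChange T' l ∧
      (∀ u v : ℝ, 0 ≤ u → u < v → v ≤ T' →
        |Real.log ((l v - l u) / (v - u))| ≤ ε) ∧
      ∀ t ∈ Icc 0 T', ‖f t - F (l t)‖ ≤ ε := by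
  set l := extendTimeChange lam R s T T'
  have hl : SlopeBoundedOn l 0 T' ε :=
    slopeBoundedOn_extendTimeChange hR hRs hlam hlog hc₁ hc₂
  have hlamR := hlam.map_right hR.le
  have hl0 : l 0 = 0 := (extendTimeChange_eqOn_Iic hR.le).trans (hlam.map_zero hR.le)
  have hlR : l R = R := (extendTimeChange_eqOn_Iic self_mem_Iic).trans hlamR
  have hls : l s = T :=
    (extendTimeChange_eqOn_Icc hlamR ⟨hRs.le, le_rfl⟩).trans (lineThrough_right hRs.ne)
  have hlT' : l T' = T' :=
    (extendTimeChange_eqOn_Ici hRs hlamR hsT'.le).trans (lineThrough_right hsT'.ne)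
  have hT' : 0 ≤ T' := by linarith
  have hmono := hl.strictMonoOn
  refine ⟨l, .of_slopeBoundedOn hl hT' hl0 hlT', hl.abs_log_le, fun t ht => ?_⟩
  rcases le_or_gt t R with htR | hRt
  · rw [show l t = lam t from extendTimeChange_eqOn_Iic htR]
    exact hlamf t ⟨ht.1, htR⟩
  rcases lt_trichotomy t s with hts | rfl | hst
  · have hlt₁ : R < l t := hlR ▸ hmono ⟨hR.le, by linarith⟩ ⟨ht.1, ht.2⟩ hRt
    have hlt₂ : l t < T := hls ▸ hmono ⟨ht.1, ht.2⟩ ⟨by linarith, hsT'.le⟩ hts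
    rw [hf₁ t ⟨hRt.le, hts⟩, hF₁ (l t) ⟨hlt₁.le, hlt₂⟩]
    simpa [hlamR] using hlamf R ⟨hR.le, le_rfl⟩
  · rwa [hls]
  · have hlt₁ : T < l t := hls ▸ hmono ⟨by linarith, hsT'.le⟩ ⟨ht.1, ht.2⟩ hst
    have hlt₂ : l t ≤ T' := hlT' ▸ hmono.monotoneOn ⟨ht.1, ht.2⟩ ⟨hT', le_rfl⟩ ht.2
    rwa [hf₂ t ⟨hst, ht.2⟩, hF₂ (l t) ⟨hlt₁, hlt₂⟩]

theorem skorohod_extension_general {m : ℕ} (T δ : ℝ) (hT : 0 < T) (hδ : 0 < δ)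
    (Fk Gk : ℕ → ℝ → EuclideanSpace ℝ (Fin m)) (F G : ℝ → EuclideanSpace ℝ (Fin m))
    (hFk : ∀ k, RCLLOn (Fk k) (T + 2 * δ))
    (hF : RCLLOn F (T + 2 * δ))
    (hconvF : ∀ R : ℝ, 0 < R → R < T → SkorohodTendsto R Fk F)
    (hconvG : ∀ R : ℝ, 0 < R → R < T → SkorohodTendsto R Gk G)
    (tk : ℕ → ℝ) (htk : Filter.Tendsto tk Filter.atTop (nhds T))
    -- (i) `F` and `G` are constant on `[T-2δ, T)` and on `(T, T+2δ]`
    (hFc₁ : ∀ s ∈ Set.Ico (T - 2 * δ) T, ∀ t ∈ Set.Ico (T - 2 * δ) T, F s = F t)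
    (hFc₂ : ∀ s ∈ Set.Ioc T (T + 2 * δ), ∀ t ∈ Set.Ioc T (T + 2 * δ), F s = F t)
    (hGc₁ : ∀ s ∈ Set.Ico (T - 2 * δ) T, ∀ t ∈ Set.Ico (T - 2 * δ) T, G s = G t)
    -- (ii) `Fk k` and `Gk k` are constant on `[T-δ, tk k)` and on `(tk k, T+δ]`
    (hFkc₁ : ∀ k, ∀ s ∈ Set.Ico (T - δ) (tk k), ∀ t ∈ Set.Ico (T - δ) (tk k),
      Fk k s = Fk k t)
    (hFkc₂ : ∀ k, ∀ s ∈ Set.Ioc (tk k) (T + δ), ∀ t ∈ Set.Ioc (tk k) (T + δ),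
      Fk k s = Fk k t)
    (hGkc₁ : ∀ k, ∀ s ∈ Set.Ico (T - δ) (tk k), ∀ t ∈ Set.Ico (T - δ) (tk k),
      Gk k s = Gk k t)
    -- (iii)
    (αk : ℕ → ℝ) (hα : Filter.Tendsto αk Filter.atTop (nhds 0))
    (hineq : ∀ k, ‖Fk k (tk k) - F T‖ ≤
      ‖Function.leftLim (Gk k) (tk k) - Function.leftLim G T‖ +
      ‖Function.leftLim (Fk k) (tk k) - Function.leftLim F T‖ + αk k) :
    SkorohodTendsto (T + δ) Fk F := by
  intro ε hε
  obtain ⟨R, hR0, hRT, hδR⟩ : ∃ R, 0 < R ∧ R < T ∧ T - δ ≤ R :=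
    ⟨max (T - δ) (T / 2), lt_max_of_lt_right (by linarith), max_lt (by linarith) (by linarith),
      le_max_left _ _⟩
  have constant_from_R : ∀ {f : ℝ → EuclideanSpace ℝ (Fin m)} {a b : ℝ},
      (∀ s ∈ Ico a b, ∀ t ∈ Ico a b, f s = f t) → a ≤ R →
        ∀ t ∈ Ico R b, f t = f R :=
    fun h ha t ht => h t ⟨ha.trans ht.1, ht.2⟩ R ⟨ha, ht.1.trans_lt ht.2⟩
  obtain ⟨K₁, hK₁⟩ := hconvF R hR0 hRT (ε / 4) (by positivity)
  obtain ⟨K₂, hK₂⟩ := hconvG R hR0 hRT (ε / 4) (by positivity)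
  obtain ⟨K₃, hK₃⟩ := eventually_atTop.1 <|
    (eventually_lineThrough_slopes_mem htk hRT (by linarith : T < T + δ) hε).and
      (hα.eventually (ge_mem_nhds (by positivity : (0 : ℝ) < ε / 4)))
  refine ⟨max K₁ (max K₂ K₃), fun k hk => ?_⟩
  obtain ⟨lam, hlam, hlamlog, hlamF⟩ := hK₁ k (le_of_max_le_left hk)
  obtain ⟨mu, hmu, -, hmuG⟩ := hK₂ k (le_of_max_le_left (le_of_max_le_right hk))
  obtain ⟨⟨hRs, hsT', hc₁, hc₂⟩, hαk⟩ :=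
    hK₃ k (le_of_max_le_right (le_of_max_le_right hk))
  have hFkR := hlam.map_right hR0.le ▸ hlamF R ⟨hR0.le, le_rfl⟩
  have hGkR := hmu.map_right hR0.le ▸ hmuG R ⟨hR0.le, le_rfl⟩
  have hjump := hineq k
  rw [leftLim_eq_of_forall_Ico hRs (constant_from_R (hGkc₁ k) hδR),
    leftLim_eq_of_forall_Ico hRT (constant_from_R hGc₁ (by linarith)),
    leftLim_eq_of_forall_Ico hRs (constant_from_R (hFkc₁ k) hδR),
    leftLim_eq_of_forall_Ico hRT (constant_from_R hFc₁ (by linarith))] at hjump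
  have hFk₂ :=
    ((hFk k).1 (tk k) ⟨by linarith, by linarith⟩).eq_of_forall_Ioc hsT' (hFkc₂ k)
  have hF₂ := (hF.1 T ⟨hT.le, by linarith⟩).eq_of_forall_Ioc (by linarith) hFc₂
  exact exists_timeChange_norm_sub_le hR0 hRs hsT' hlam
    (fun u v hu huv hv => (hlamlog u v hu huv hv).trans (by linarith))
    (fun t ht => (hlamF t ht).trans (by linarith)) hc₁ hc₂
    (constant_from_R (hFkc₁ k) hδR) (constant_from_R hFc₁ (by linarith)) hFk₂
    (fun t ht => hF₂ t ⟨ht.1, by linarith [ht.2]⟩) (by linarith)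

/-- extension lemma for Skorohod convergence. -/
theorem skorohod_extension {m : ℕ} (T δ : ℝ) (hT : 0 < T) (hδ : 0 < δ)
    (Fk Gk : ℕ → ℝ → EuclideanSpace ℝ (Fin m)) (F G : ℝ → EuclideanSpace ℝ (Fin m))
    (hFk : ∀ k, RCLLOn (Fk k) (T + 2 * δ)) (hGk : ∀ k, RCLLOn (Gk k) (T + 2 * δ))
    (hF : RCLLOn F (T + 2 * δ)) (hG : RCLLOn G (T + 2 * δ))
    (hconvF : ∀ R : ℝ, 0 < R → R < T → SkorohodTendsto R Fk F)
    (hconvG : ∀ R : ℝ, 0 < R → R < T → SkorohodTendsto R Gk G)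
    (tk : ℕ → ℝ) (htk : Filter.Tendsto tk Filter.atTop (nhds T))
    -- (i) `F` and `G` are constant on `[T-2δ, T)` and on `(T, T+2δ]`
    (hFc₁ : ∀ s ∈ Set.Ico (T - 2 * δ) T, ∀ t ∈ Set.Ico (T - 2 * δ) T, F s = F t)
    (hFc₂ : ∀ s ∈ Set.Ioc T (T + 2 * δ), ∀ t ∈ Set.Ioc T (T + 2 * δ), F s = F t)
    (hGc₁ : ∀ s ∈ Set.Ico (T - 2 * δ) T, ∀ t ∈ Set.Ico (T - 2 * δ) T, G s = G t)
    (hGc₂ : ∀ s ∈ Set.Ioc T (T + 2 * δ), ∀ t ∈ Set.Ioc T (T + 2 * δ), G s = G t)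
    -- (ii) `Fk k` and `Gk k` are constant on `[T-δ, tk k)` and on `(tk k, T+δ]`
    (hFkc₁ : ∀ k, ∀ s ∈ Set.Ico (T - δ) (tk k), ∀ t ∈ Set.Ico (T - δ) (tk k),
      Fk k s = Fk k t)
    (hFkc₂ : ∀ k, ∀ s ∈ Set.Ioc (tk k) (T + δ), ∀ t ∈ Set.Ioc (tk k) (T + δ),
      Fk k s = Fk k t)
    (hGkc₁ : ∀ k, ∀ s ∈ Set.Ico (T - δ) (tk k), ∀ t ∈ Set.Ico (T - δ) (tk k),
      Gk k s = Gk k t)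
    (hGkc₂ : ∀ k, ∀ s ∈ Set.Ioc (tk k) (T + δ), ∀ t ∈ Set.Ioc (tk k) (T + δ),
      Gk k s = Gk k t)
    -- (iii)
    (αk : ℕ → ℝ) (hα : Filter.Tendsto αk Filter.atTop (nhds 0))
    (hineq : ∀ k, ‖Fk k (tk k) - F T‖ ≤
      ‖Function.leftLim (Gk k) (tk k) - Function.leftLim G T‖ +
      ‖Function.leftLim (Fk k) (tk k) - Function.leftLim F T‖ + αk k) :
    SkorohodTendsto (T + δ) Fk F :=
  skorohod_extension_general T δ hT hδ Fk Gk F G hFk hF hconvF hconvG tk htk hFc₁ hFc₂ hGc₁ hFkc₁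
    hFkc₂ hGkc₁ αk hα hineq
end

section
/- Let T > 0 and α > 0, and let F_k, F be ℝ^m-valued right-continuous functions with left limits on [0, T+α]. Assume F_k → F in the Skorohod sense in D[0,R] for every 0 < R < T, and that F_k (for every k) and F are constant on the interval [T−α, T+α]. Then F_k → F in the Skorohod sense in D[0, T+α]. -/
open Filter

/-!
A time change of `[0, R]` with small dilation extends to `[0, S]` by the identity on `[R, S]`:
every increment of the extension is an increment of the old time change plus an increment of
the identity, so the dilation bound survives. Since the old time change fixes `R`, paths that are
constant on `[R, S]` stay uniformly as close as before. For the theorem take any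
`R ∈ (max (T - α) 0, T)`.
-/

open Set Real

theorem abs_log_div_le_iff {a b ε : ℝ} (ha : 0 < a) (hb : 0 < b) :
    |log (a / b)| ≤ ε ↔ exp (-ε) * b ≤ a ∧ a ≤ exp ε * b := by
  rw [abs_le, le_log_iff_exp_le (div_pos ha hb), log_le_iff_le_exp (div_pos ha hb),
    le_div_iff₀ hb, div_le_iff₀ hb]

/-- The bound `‖l‖_R ≤ ε` on the dilation of a time change. -/
def DilationLE (R ε : ℝ) (l : ℝ → ℝ) : Prop :=
  ∀ s t : ℝ, 0 ≤ s → s < t → t ≤ R → |log ((l t - l s) / (t - s))| ≤ ε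

theorem isTimeChange_of_strictMonoOn {S : ℝ} {l : ℝ → ℝ} (hS : 0 ≤ S)
    (hmono : StrictMonoOn l (Icc 0 S)) (hcont : ContinuousOn l (Icc 0 S))
    (h0 : l 0 = 0) (hlS : l S = S) : IsTimeChange S l :=
  ⟨hmono, hcont, by rw [hcont.image_Icc_of_monotoneOn hS hmono.monotoneOn, h0, hlS]⟩

namespace IsTimeChange

variable {R : ℝ} {l : ℝ → ℝ}

theorem mapsTo (hl : IsTimeChange R l) : MapsTo l (Icc 0 R) (Icc 0 R) :=
  fun _ hx => hl.2.2 ▸ mem_image_of_mem l hx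

theorem map_zero_s12 (hl : IsTimeChange R l) (hR : 0 ≤ R) : l 0 = 0 := by
  have h0 : (0 : ℝ) ∈ Icc 0 R := ⟨le_rfl, hR⟩
  obtain ⟨x, hx, hlx⟩ : (0 : ℝ) ∈ l '' Icc 0 R := by rw [hl.2.2]; exact h0
  exact le_antisymm (hlx ▸ hl.1.monotoneOn h0 hx hx.1) (hl.mapsTo h0).1

theorem map_right_s12 (hl : IsTimeChange R l) (hR : 0 ≤ R) : l R = R := by
  have hRR : R ∈ Icc 0 R := ⟨hR, le_rfl⟩
  obtain ⟨x, hx, hlx⟩ : R ∈ l '' Icc 0 R := by rw [hl.2.2]; exact hRR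
  have hxR : l x ≤ l R := hl.1.monotoneOn hx hRR hx.2
  exact le_antisymm (hl.mapsTo hRR).2 (hlx ▸ hxR)

theorem sub_mem_Icc_of_dilationLE (hl : IsTimeChange R l) {ε : ℝ} (hlog : DilationLE R ε l)
    {s t : ℝ} (hs : 0 ≤ s) (hst : s ≤ t) (ht : t ≤ R) :
    l t - l s ∈ Icc (exp (-ε) * (t - s)) (exp ε * (t - s)) := by
  rcases hst.eq_or_lt with rfl | hst
  · simp
  have hinc : 0 < l t - l s :=
    sub_pos.2 (hl.1 ⟨hs, hst.le.trans ht⟩ ⟨hs.trans hst.le, ht⟩ hst)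
  exact (abs_log_div_le_iff hinc (sub_pos.2 hst)).1 (hlog s t hs hst ht)

end IsTimeChange

def extendById (l : ℝ → ℝ) (R t : ℝ) : ℝ :=
  l (min t R) + max (t - R) 0

section extendById

variable {R : ℝ} {l : ℝ → ℝ}

theorem extendById_of_le {t : ℝ} (ht : t ≤ R) : extendById l R t = l t := by
  simp [extendById, ht]

theorem extendById_of_ge (hlR : l R = R) {t : ℝ} (ht : R ≤ t) : extendById l R t = t := by
  simp [extendById, ht, hlR]

theorem max_sub_zero_eq_sub_min (u R : ℝ) : max (u - R) 0 = u - min u R := by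
  rcases le_total u R with h | h <;> simp [h]

theorem extendById_sub (s t : ℝ) :
    extendById l R t - extendById l R s =
      (l (min t R) - l (min s R)) + ((t - s) - (min t R - min s R)) := by
  simp only [extendById, max_sub_zero_eq_sub_min]
  ring

theorem sub_min_le_sub_min {s t : ℝ} (hst : s ≤ t) : min t R - min s R ≤ t - s := by
  rcases le_total t R with h | h <;> rcases le_total s R with h' | h' <;>
    simp only [h, h', min_eq_left, min_eq_right] <;> linarith

theorem IsTimeChange.extendById_sub_mem_Icc (hl : IsTimeChange R l) (hR : 0 ≤ R) {ε : ℝ}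
    (hε : 0 ≤ ε) (hlog : DilationLE R ε l) {s t : ℝ} (hs : 0 ≤ s) (hst : s ≤ t) :
    extendById l R t - extendById l R s ∈ Icc (exp (-ε) * (t - s)) (exp ε * (t - s)) := by
  have hold := hl.sub_mem_Icc_of_dilationLE hlog (le_min hs hR) (min_le_min_right R hst)
    (min_le_right t R)
  have hid : 0 ≤ (t - s) - (min t R - min s R) := sub_nonneg.2 (sub_min_le_sub_min hst)
  have hexp_neg : exp (-ε) ≤ 1 := exp_le_one_iff.2 (neg_nonpos.2 hε)
  have hexp : 1 ≤ exp ε := one_le_exp hε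
  rw [extendById_sub]
  constructor <;> nlinarith [hold.1, hold.2]

theorem IsTimeChange.isTimeChange_extendById {S : ℝ} (hl : IsTimeChange R l) (hR : 0 ≤ R)
    (hRS : R ≤ S) {ε : ℝ} (hε : 0 ≤ ε) (hlog : DilationLE R ε l) :
    IsTimeChange S (extendById l R) := by
  refine isTimeChange_of_strictMonoOn (hR.trans hRS) (fun s hs t _ hst => ?_) ?_
    ((extendById_of_le hR).trans (hl.map_zero_s12 hR)) (extendById_of_ge (hl.map_right_s12 hR) hRS)
  · have := (hl.extendById_sub_mem_Icc hR hε hlog hs.1 hst.le).1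
    nlinarith [exp_pos (-ε)]
  · exact (hl.2.1.comp (continuous_id.min continuous_const).continuousOn
      fun x hx => ⟨le_min hx.1 hR, min_le_right x R⟩).add
      ((continuous_id.sub continuous_const).max continuous_const).continuousOn

theorem IsTimeChange.dilationLE_extendById (hl : IsTimeChange R l) (hR : 0 ≤ R) {ε : ℝ}
    (hε : 0 ≤ ε) (hlog : DilationLE R ε l) (S : ℝ) : DilationLE S ε (extendById l R) := by
  intro s t hs hst _
  have h := hl.extendById_sub_mem_Icc hR hε hlog hs hst.le
  have hpos : 0 < t - s := sub_pos.2 hst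
  exact (abs_log_div_le_iff ((mul_pos (exp_pos _) hpos).trans_le h.1) hpos).2 h

end extendById

theorem SkorohodTendsto.extend_of_const {m : ℕ} {R S : ℝ}
    {Fk : ℕ → ℝ → EuclideanSpace ℝ (Fin m)} {F : ℝ → EuclideanSpace ℝ (Fin m)}
    (h : SkorohodTendsto R Fk F) (hR : 0 ≤ R) (hRS : R ≤ S)
    (hFkc : ∀ k, ∀ t ∈ Icc R S, Fk k t = Fk k R) (hFc : ∀ t ∈ Icc R S, F t = F R) :
    SkorohodTendsto S Fk F := by
  intro ε hε
  obtain ⟨K, hK⟩ := h ε hε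
  refine ⟨K, fun k hk => ?_⟩
  obtain ⟨l, hl : IsTimeChange R l, hlog, hsup⟩ := hK k hk
  refine ⟨extendById l R, hl.isTimeChange_extendById hR hRS hε.le hlog,
    hl.dilationLE_extendById hR hε.le hlog S, fun t ht => ?_⟩
  rcases le_total t R with htR | hRt
  · rw [extendById_of_le htR]
    exact hsup t ⟨ht.1, htR⟩
  · have htRS : t ∈ Icc R S := ⟨hRt, ht.2⟩
    rw [extendById_of_ge (hl.map_right_s12 hR) hRt, hFkc k t htRS, hFc t htRS,
      ← congrArg F (hl.map_right_s12 hR)]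
    exact hsup R ⟨hR, le_rfl⟩

theorem skorohod_extension_const_general {m : ℕ} (T α : ℝ) (hT : 0 < T) (hα : 0 < α)
    (Fk : ℕ → ℝ → EuclideanSpace ℝ (Fin m)) (F : ℝ → EuclideanSpace ℝ (Fin m))
    (hconv : ∀ R : ℝ, 0 < R → R < T → SkorohodTendsto R Fk F)
    (hFkc : ∀ k, ∀ s ∈ Set.Icc (T - α) (T + α), ∀ t ∈ Set.Icc (T - α) (T + α),
      Fk k s = Fk k t)
    (hFc : ∀ s ∈ Set.Icc (T - α) (T + α), ∀ t ∈ Set.Icc (T - α) (T + α), F s = F t) :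
    SkorohodTendsto (T + α) Fk F := by
  obtain ⟨R, hR, hRT⟩ := exists_between (max_lt (by linarith) hT : max (T - α) 0 < T)
  have hRmem : R ∈ Icc (T - α) (T + α) := ⟨(le_max_left _ _).trans hR.le, by linarith⟩
  have hIcc : Icc R (T + α) ⊆ Icc (T - α) (T + α) := Icc_subset_Icc_left hRmem.1
  exact (hconv R ((le_max_right _ _).trans_lt hR) hRT).extend_of_const
    ((le_max_right _ _).trans hR.le) (by linarith)
    (fun k t ht => hFkc k t (hIcc ht) R hRmem) (fun t ht => hFc t (hIcc ht) R hRmem)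

/-- corollary of the extension lemma. -/
theorem skorohod_extension_const {m : ℕ} (T α : ℝ) (hT : 0 < T) (hα : 0 < α)
    (Fk : ℕ → ℝ → EuclideanSpace ℝ (Fin m)) (F : ℝ → EuclideanSpace ℝ (Fin m))
    (hFk : ∀ k, RCLLOn (Fk k) (T + α)) (hF : RCLLOn F (T + α))
    (hconv : ∀ R : ℝ, 0 < R → R < T → SkorohodTendsto R Fk F)
    (hFkc : ∀ k, ∀ s ∈ Set.Icc (T - α) (T + α), ∀ t ∈ Set.Icc (T - α) (T + α),
      Fk k s = Fk k t)
    (hFc : ∀ s ∈ Set.Icc (T - α) (T + α), ∀ t ∈ Set.Icc (T - α) (T + α), F s = F t) :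
    SkorohodTendsto (T + α) Fk F :=
  skorohod_extension_const_general T α hT hα Fk F hconv hFkc hFc
end
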